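/- arXiv:1310.0726 — 2 statements merged into one kernel-verified Lean document; each statement's English description precedes it below -/
import Mathlib

section
/- Under the stated assumptions, a left-window cutoff at (t_n, w_n) holds with maximal distance M = +∞: lim_{c → −∞} liminf_{n → ∞} inf_{0 < t < t_n + c·w_n} d_n(t) = +∞. (Note that each d_n is nonincreasing in t since all coefficients a_{i,n} are nonnegative, so inf_{0 < t < t_n + c·w_n} d_n(t) = d_n(t_n + c·w_n) whenever t_n + c·w_n > 0.) -/
/-!
For every `i`, the `i`-th partial sum `S_i` of the coefficients alone forces
`d(s) ≥ S_i e^{-ρ_i s} = exp (ρ_i (L_i - s))`, where `L_i = log (max 1 S_i) / ρ_i`, as soon as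
`0 ≤ s < L_i`. Since `t_n = sup_i L_i`, some `L_i` exceeds `t_n + c w_n / 2`; for
`s < t_n + c w_n` this gives `ρ_i (L_i - s) ≥ ρ_1 · (-c w_n / 2) = -c / 2`, so `d_n ≥ e^{-c/2}` on
the whole window, uniformly in `n`, and `e^{-c/2} → ∞` as `c → -∞`.
-/

open Filter Real
open scoped ENNReal Topology

section DirichletSeries

variable {a ρ : ℕ → ℝ}

theorem sum_range_mul_exp_le (ha : ∀ j, 0 ≤ a j) (hρ : Monotone ρ) {s : ℝ} (hs : 0 ≤ s)
    (i : ℕ) :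
    (∑ j ∈ Finset.range (i + 1), a j) * exp (-ρ i * s) ≤
      ∑ j ∈ Finset.range (i + 1), a j * exp (-ρ j * s) := by
  rw [Finset.sum_mul]
  refine Finset.sum_le_sum fun j hj => mul_le_mul_of_nonneg_left ?_ (ha j)
  have hji : ρ j ≤ ρ i := hρ (Nat.lt_succ_iff.mp (Finset.mem_range.mp hj))
  exact exp_le_exp.mpr (by nlinarith)

theorem ofReal_sum_range_mul_exp_le_tsum (ha : ∀ j, 0 ≤ a j) (hρ : Monotone ρ) {s : ℝ}
    (hs : 0 ≤ s) (i : ℕ) :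
    ENNReal.ofReal ((∑ j ∈ Finset.range (i + 1), a j) * exp (-ρ i * s)) ≤
      ∑' j, ENNReal.ofReal (a j * exp (-ρ j * s)) :=
  calc ENNReal.ofReal ((∑ j ∈ Finset.range (i + 1), a j) * exp (-ρ i * s))
      ≤ ENNReal.ofReal (∑ j ∈ Finset.range (i + 1), a j * exp (-ρ j * s)) :=
        ENNReal.ofReal_le_ofReal (sum_range_mul_exp_le ha hρ hs i)
    _ = ∑ j ∈ Finset.range (i + 1), ENNReal.ofReal (a j * exp (-ρ j * s)) :=
        ENNReal.ofReal_sum_of_nonneg fun j _ => mul_nonneg (ha j) (exp_pos _).le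
    _ ≤ ∑' j, ENNReal.ofReal (a j * exp (-ρ j * s)) := ENNReal.sum_le_tsum _

theorem ofReal_exp_mul_sub_le_tsum (ha : ∀ j, 0 ≤ a j) (hρ : Monotone ρ) {i : ℕ}
    (hρi : 0 < ρ i) {s : ℝ} (hs : 0 ≤ s)
    (hsL : s < log (max 1 (∑ j ∈ Finset.range (i + 1), a j)) / ρ i) :
    ENNReal.ofReal (exp (ρ i * (log (max 1 (∑ j ∈ Finset.range (i + 1), a j)) / ρ i - s))) ≤
      ∑' j, ENNReal.ofReal (a j * exp (-ρ j * s)) := by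
  set S := ∑ j ∈ Finset.range (i + 1), a j
  have hlog : 0 < log (max 1 S) := (div_pos_iff_of_pos_right hρi).mp (hs.trans_lt hsL)
  have hS : max 1 S = S := by
    have := (log_pos_iff (zero_le_one.trans (le_max_left 1 S))).mp hlog
    exact max_eq_right ((lt_max_iff.mp this).resolve_left (lt_irrefl 1)).le
  have hexp : exp (ρ i * (log (max 1 S) / ρ i - s)) = S * exp (-ρ i * s) := by
    rw [mul_sub, mul_div_cancel₀ _ hρi.ne', sub_eq_add_neg, exp_add, exp_log (by positivity),
      hS, neg_mul]
  rw [hexp]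
  exact ofReal_sum_range_mul_exp_le_tsum ha hρ hs i

theorem ofReal_exp_neg_half_le_iInf_tsum (ha : ∀ j, 0 ≤ a j) (hρ : Monotone ρ) (hρ0 : 0 < ρ 0)
    {t c : ℝ}
    (ht : IsLUB (Set.range fun i => log (max 1 (∑ j ∈ Finset.range (i + 1), a j)) / ρ i) t)
    (hc : c < 0) :
    ENNReal.ofReal (exp (-c / 2)) ≤
      ⨅ (s : ℝ) (_ : 0 < s ∧ s < t + c / ρ 0), ∑' j, ENNReal.ofReal (a j * exp (-ρ j * s)) := by
  have hcw : c / ρ 0 < 0 := div_neg_of_neg_of_pos hc hρ0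
  obtain ⟨_, ⟨i, rfl⟩, hLi, -⟩ := ht.exists_between (by linarith : t + c / ρ 0 / 2 < t)
  refine le_iInf₂ fun s ⟨hs0, hst⟩ => ?_
  have hρi : 0 < ρ i := hρ0.trans_le (hρ i.zero_le)
  refine le_trans (ENNReal.ofReal_le_ofReal (exp_le_exp.mpr ?_))
    (ofReal_exp_mul_sub_le_tsum ha hρ hρi hs0.le (by linarith))
  calc -c / 2 = ρ 0 * (-(c / ρ 0) / 2) := by field_simp
    _ ≤ ρ i * (log (max 1 (∑ j ∈ Finset.range (i + 1), a j)) / ρ i - s) :=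
        mul_le_mul (hρ i.zero_le) (by linarith) (by linarith) hρi.le

end DirichletSeries

theorem tendsto_ofReal_exp_neg_half_atBot :
    Tendsto (fun c : ℝ => ENNReal.ofReal (exp (-c / 2))) atBot (𝓝 ∞) :=
  ENNReal.tendsto_ofReal_atTop.comp
    (tendsto_exp_atTop.comp (tendsto_neg_atBot_atTop.atTop_div_const two_pos))

theorem left_window_cutoff_general
    (a ρ : ℕ → ℕ → ℝ)
    (hρ_pos : ∀ n i, 0 < ρ n i)
    (hρ_mono : ∀ n, StrictMono (ρ n))
    (ha_nonneg : ∀ n i, 0 ≤ a n i)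
    (A : ℕ → ℕ → ℝ)
    (hA : ∀ n i, A n i = max 1 (∑ j ∈ Finset.range (i + 1), a n j))
    (d : ℕ → ℝ → ℝ≥0∞)
    (hd : ∀ n s, d n s = ∑' i, ENNReal.ofReal (a n i * Real.exp (-(ρ n i) * s)))
    (t w : ℕ → ℝ)
    (ht : ∀ᶠ n in atTop,
      IsLUB (Set.range fun i => Real.log (A n i) / ρ n i) (t n) ∧ 0 < t n)
    (hw : ∀ n, w n = 1 / ρ n 0) :
    Tendsto
      (fun c : ℝ => Filter.liminf
        (fun n => ⨅ (s : ℝ) (_ : 0 < s ∧ s < t n + c * w n), d n s) atTop)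
      atBot (𝓝 (⊤ : ℝ≥0∞)) := by
  refine tendsto_nhds_top_mono tendsto_ofReal_exp_neg_half_atBot ?_
  filter_upwards [eventually_lt_atBot 0] with c hc
  refine le_liminf_of_le (by isBoundedDefault) (ht.mono fun n hn => ?_)
  simp only [hA] at hn
  simpa only [hd, hw, mul_one_div] using
    ofReal_exp_neg_half_le_iInf_tsum (ha_nonneg n) (hρ_mono n).monotone (hρ_pos n 0) hn.1 hc

/-- Theorem 2 of Barrera–Ycart: a left-window cutoff at `(t_n, w_n)` with
maximal distance `M = +∞` holds:
`lim_{c → -∞} liminf_n inf_{0 < s < t_n + c w_n} d_n(s) = +∞`.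
Indices are zero-based: Lean index `i` corresponds to paper index `i+1`. -/
theorem left_window_cutoff
    (a ρ : ℕ → ℕ → ℝ)
    (hρ_pos : ∀ n i, 0 < ρ n i)
    (hρ_mono : ∀ n, StrictMono (ρ n))
    (ha_nonneg : ∀ n i, 0 ≤ a n i)
    (ha_pos : ∀ n, 0 < a n 0)
    (A : ℕ → ℕ → ℝ)
    (hA : ∀ n i, A n i = max 1 (∑ j ∈ Finset.range (i + 1), a n j))
    (d : ℕ → ℝ → ℝ≥0∞)
    (hd : ∀ n s, d n s = ∑' i, ENNReal.ofReal (a n i * Real.exp (-(ρ n i) * s)))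
    (t w r : ℕ → ℝ)
    (ht : ∀ᶠ n in atTop,
      IsLUB (Set.range fun i => Real.log (A n i) / ρ n i) (t n) ∧ 0 < t n)
    (hw : ∀ n, w n = 1 / ρ n 0)
    (hr : ∀ n, r n = w n * (Real.log (ρ n 0 * t n) - Real.log (Real.log (ρ n 0 * t n))))
    (hPeres : Tendsto (fun n => ρ n 0 * t n) atTop atTop)
    (hα : ∃ α > (0 : ℝ), ∀ᶠ n in atTop, ∀ i, a n (i + 1) ≤ α * A n i) :
    Tendsto
      (fun c : ℝ => Filter.liminf
        (fun n => ⨅ (s : ℝ) (_ : 0 < s ∧ s < t n + c * w n), d n s) atTop)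
      atBot (𝓝 (⊤ : ℝ≥0∞)) :=
  left_window_cutoff_general a ρ hρ_pos hρ_mono ha_nonneg A hA d hd t w ht hw
end

section
/- Assume that the (possibly infinite) limit γ = lim_{n → ∞} (1 − β_n)·ℓ_n exists in [0, +∞]. Then for every real c, lim_{n → ∞} d_n(1 + ℓ_n/n + c/n) = e^{−c}·(1 + e^{−γ}) (with the convention e^{−∞} = 0). -/
open Filter Real
open scoped ENNReal Topology

/-- `ℓ_n = log(n / log n)`. -/
noncomputable def ell (n : ℕ) : ℝ := Real.log (n / Real.log n)

/-- Distance to equilibrium of the Ornstein–Uhlenbeck example of Barrera–Ycart: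
`d_n(t) = Σ_{i=1}^{9^n} a_{i,n} e^{-ρ_{i,n} t}` with `a_{1,n} = e^n`,
`ρ_{1,n} = n/(1 + (β_n/n) ℓ_n)`, and for `2 ≤ i ≤ 9^n`:
`a_{i,n} = e^{-n}`, `ρ_{i,n} = log(e^n + (i-1) e^{-n})`. -/
noncomputable def dCut (β : ℕ → ℝ) (n : ℕ) (t : ℝ) : ℝ :=
  Real.exp n * Real.exp (-((n : ℝ) / (1 + β n / n * ell n)) * t) +
    ∑ i ∈ Finset.Icc (2 : ℕ) (9 ^ n),
      Real.exp (-(n : ℝ)) *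
        Real.exp (-Real.log (Real.exp n + ((i : ℝ) - 1) * Real.exp (-(n : ℝ))) * t)

/-- Cutoff location `t_n = 1 + β_n ℓ_n / n`. -/
noncomputable def cutT (β : ℕ → ℝ) (n : ℕ) : ℝ := 1 + β n * ell n / n

/-- Window width `w_n = t_n / n`. -/
noncomputable def cutW (β : ℕ → ℝ) (n : ℕ) : ℝ := cutT β n / n

/-- Correction term `r_n = ℓ_n w_n`. -/
noncomputable def cutR (β : ℕ → ℝ) (n : ℕ) : ℝ := ell n * cutW β n

/-!
Write `t = 1 + s` with `s = (ℓ_n + c) / n`. The leading term equals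
`exp (-((1 - β_n) ℓ_n + c) / (1 + β_n ℓ_n / n))`, and since `β_n ℓ_n / n → 0` it tends to
`e^{-γ} e^{-c}`. The remaining sum is `e^{-n} Σ_{i=2}^{9^n} f i` for the decreasing function
`f x = (e^n + (x - 1) e^{-n})^{-(1+s)}`; comparing it with `∫_1^{9^n} f` pins it, up to an error
`e^{-n} f 1 ≤ e^{-n}`, to `((e^n)^{-s} - B^{-s}) / s` with `B = e^n + (9^n - 1) e^{-n}`.
Because `(e^n)^{-s} = e^{-c} log n / n`, the first part tends to `e^{-c}`, while `B ≥ (9/e)^n`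
makes the second one smaller by a factor `e^{-(ℓ_n + c)(log 9 - 2)} → 0`.
-/

lemma ell_nonneg (n : ℕ) : 0 ≤ ell n := by
  rcases lt_or_ge n 2 with hn | hn
  · interval_cases n <;> simp [ell]
  · have hn' : (1 : ℝ) < n := by exact_mod_cast hn
    have hlog : 0 < Real.log n := Real.log_pos hn'
    apply Real.log_nonneg
    rw [le_div_iff₀ hlog, one_mul]
    linarith [Real.log_le_sub_one_of_pos (x := (n : ℝ)) (by linarith)]

lemma ell_eq_log_sub_log_log {n : ℕ} (hn : 2 ≤ n) :
    ell n = Real.log n - Real.log (Real.log n) := by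
  have hlog : 0 < Real.log n := Real.log_pos (by exact_mod_cast hn)
  rw [ell, Real.log_div (by positivity) hlog.ne']

lemma exp_neg_ell {n : ℕ} (hn : 2 ≤ n) : Real.exp (-ell n) = Real.log n / n := by
  have hlog : 0 < Real.log n := Real.log_pos (by exact_mod_cast hn)
  rw [ell, Real.exp_neg, Real.exp_log (div_pos (by positivity) hlog), inv_div]

lemma tendsto_log_natCast_atTop : Tendsto (fun n : ℕ => Real.log n) atTop atTop :=
  Real.tendsto_log_atTop.comp tendsto_natCast_atTop_atTop

lemma tendsto_ell_div_log : Tendsto (fun n : ℕ => ell n / Real.log n) atTop (𝓝 1) := by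
  have h : Tendsto (fun n : ℕ => 1 - Real.log (Real.log n) / Real.log n) atTop (𝓝 (1 - 0)) :=
    tendsto_const_nhds.sub
      (Real.isLittleO_log_id_atTop.comp_tendsto tendsto_log_natCast_atTop).tendsto_div_nhds_zero
  rw [sub_zero] at h
  refine h.congr' ?_
  filter_upwards [eventually_ge_atTop 2] with n hn
  have hlog : 0 < Real.log n := Real.log_pos (by exact_mod_cast hn)
  rw [ell_eq_log_sub_log_log hn, sub_div, div_self hlog.ne']

lemma tendsto_ell_atTop : Tendsto ell atTop atTop := by
  refine (tendsto_log_natCast_atTop.atTop_mul_pos one_pos tendsto_ell_div_log).congr' ?_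
  filter_upwards [tendsto_log_natCast_atTop.eventually_gt_atTop 0] with n hlog
  field_simp

lemma tendsto_ell_div_natCast : Tendsto (fun n : ℕ => ell n / n) atTop (𝓝 0) := by
  have h := tendsto_ell_div_log.mul
    (Real.isLittleO_log_id_atTop.comp_tendsto tendsto_natCast_atTop_atTop).tendsto_div_nhds_zero
  rw [mul_zero] at h
  refine h.congr' ?_
  filter_upwards [tendsto_log_natCast_atTop.eventually_gt_atTop 0] with n hlog
  simp only [Function.comp_apply, id]
  field_simp

lemma tendsto_log_div_ell_add (c : ℝ) :
    Tendsto (fun n : ℕ => Real.log n / (ell n + c)) atTop (𝓝 1) := by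
  have h : Tendsto (fun n : ℕ => (ell n / Real.log n + c / Real.log n)⁻¹) atTop (𝓝 (1 + 0)⁻¹) :=
    (tendsto_ell_div_log.add (tendsto_const_nhds.div_atTop tendsto_log_natCast_atTop)).inv₀
      (by norm_num)
  rw [add_zero, inv_one] at h
  refine h.congr' ?_
  filter_upwards [tendsto_log_natCast_atTop.eventually_gt_atTop 0] with n hlog
  rw [← add_div, inv_div]

section AntitoneSum

variable {f : ℝ → ℝ} {a b : ℕ}

theorem AntitoneOn.sum_Ioc_le_integral (hab : a ≤ b) (hf : AntitoneOn f (Set.Icc a b)) :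
    ∑ i ∈ Finset.Ioc a b, f i ≤ ∫ x in a..b, f x := by
  have h := hf.sum_le_integral_Ico hab
  rwa [Finset.sum_Ico_add' (fun i : ℕ => f i), Finset.Ico_add_one_add_one_eq_Ioc] at h

theorem AntitoneOn.integral_add_le_add_sum_Ioc (hab : a ≤ b) (hf : AntitoneOn f (Set.Icc a b)) :
    (∫ x in a..b, f x) + f b ≤ f a + ∑ i ∈ Finset.Ioc a b, f i := by
  have h := hf.integral_le_sum_Ico hab
  have hIcc := (Finset.sum_Ico_add_eq_sum_Icc (f := fun i : ℕ => f i) hab).trans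
    (Finset.add_sum_Ioc_eq_sum_Icc hab).symm
  linarith

end AntitoneSum

theorem integral_mul_add_rpow_neg_one_sub {h d s a b : ℝ} (hh : 0 < h) (hs : s ≠ 0)
    (hab : a ≤ b) (hd : 0 < h * a + d) :
    ∫ x in a..b, (h * x + d) ^ (-(1 + s)) =
      ((h * a + d) ^ (-s) - (h * b + d) ^ (-s)) / (s * h) := by
  have hle : h * a + d ≤ h * b + d := by gcongr
  have hzero : (0 : ℝ) ∉ Set.uIcc (h * a + d) (h * b + d) := by
    rw [Set.uIcc_of_le hle]
    exact fun h0 => hd.not_ge h0.1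
  rw [intervalIntegral.integral_comp_mul_add (fun y => y ^ (-(1 + s))) hh.ne',
    integral_rpow (Or.inr ⟨by contrapose! hs; linarith, hzero⟩), smul_eq_mul,
    show -(1 + s) + 1 = -s by ring]
  field_simp
  ring

theorem mul_sum_Icc_rpow_neg_one_sub_bounds {A h s : ℝ} (hA : 0 < A) (hh : 0 < h) (hs : 0 < s)
    {M : ℕ} (hM : 1 ≤ M) :
    (A ^ (-s) - (A + (M - 1) * h) ^ (-s)) / s - h * A ^ (-(1 + s)) ≤
        h * ∑ i ∈ Finset.Icc 2 M, (A + (i - 1) * h) ^ (-(1 + s)) ∧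
      h * ∑ i ∈ Finset.Icc 2 M, (A + (i - 1) * h) ^ (-(1 + s)) ≤
        (A ^ (-s) - (A + (M - 1) * h) ^ (-s)) / s := by
  set g : ℝ → ℝ := fun x => (h * x + (A - h)) ^ (-(1 + s)) with hg
  have hg_eq (x : ℝ) : g x = (A + (x - 1) * h) ^ (-(1 + s)) := by rw [hg]; ring_nf
  have hbase {x : ℝ} (hx : 1 ≤ x) : 0 < h * x + (A - h) := by nlinarith
  have hanti : AntitoneOn g (Set.Icc ((1 : ℕ) : ℝ) M) := by
    intro x hx y hy hxy
    simp only [Nat.cast_one, Set.mem_Icc] at hx hy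
    exact Real.rpow_le_rpow_of_nonpos (hbase hx.1) (by gcongr) (by linarith)
  have hint : h * ∫ x in ((1 : ℕ) : ℝ)..M, g x = (A ^ (-s) - (A + (M - 1) * h) ^ (-s)) / s := by
    have hM' : ((1 : ℕ) : ℝ) ≤ M := by exact_mod_cast hM
    rw [hg, integral_mul_add_rpow_neg_one_sub hh hs.ne' hM' (hbase (by norm_num))]
    field_simp
    ring_nf
  have hsum : ∑ i ∈ Finset.Icc 2 M, (A + ((i : ℕ) - 1) * h) ^ (-(1 + s)) =
      ∑ i ∈ Finset.Ioc 1 M, g i := by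
    rw [← Finset.Icc_add_one_left_eq_Ioc]
    exact Finset.sum_congr rfl fun i _ => (hg_eq i).symm
  have hgM : 0 ≤ g M := Real.rpow_nonneg (hbase (by exact_mod_cast hM)).le _
  have hg1 : g ((1 : ℕ) : ℝ) = A ^ (-(1 + s)) := by rw [hg_eq]; norm_num
  have hupper := mul_le_mul_of_nonneg_left (hanti.sum_Ioc_le_integral hM) hh.le
  have hlower := mul_le_mul_of_nonneg_left (hanti.integral_add_le_add_sum_Ioc hM) hh.le
  rw [hsum, ← hint]
  constructor <;> nlinarith

noncomputable def dCutTail (n : ℕ) (t : ℝ) : ℝ :=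
  ∑ i ∈ Finset.Icc (2 : ℕ) (9 ^ n),
    Real.exp (-(n : ℝ)) *
      Real.exp (-Real.log (Real.exp n + ((i : ℝ) - 1) * Real.exp (-(n : ℝ))) * t)

lemma dCut_eq_add_dCutTail (β : ℕ → ℝ) (n : ℕ) (t : ℝ) :
    dCut β n t = Real.exp n * Real.exp (-((n : ℝ) / (1 + β n / n * ell n)) * t) +
      dCutTail n t :=
  rfl

lemma dCutTail_one_add_bounds {n : ℕ} {s : ℝ} (hs : 0 < s) :
    (Real.exp n ^ (-s) - (Real.exp n + ((9 : ℝ) ^ n - 1) * Real.exp (-(n : ℝ))) ^ (-s)) / s -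
        Real.exp (-(n : ℝ)) * Real.exp n ^ (-(1 + s)) ≤ dCutTail n (1 + s) ∧
      dCutTail n (1 + s) ≤
        (Real.exp n ^ (-s) - (Real.exp n + ((9 : ℝ) ^ n - 1) * Real.exp (-(n : ℝ))) ^ (-s)) / s := by
  have hterm (i : ℕ) (hi : i ∈ Finset.Icc 2 (9 ^ n)) :
      Real.exp (-Real.log (Real.exp n + ((i : ℝ) - 1) * Real.exp (-(n : ℝ))) * (1 + s)) =
        (Real.exp n + ((i : ℝ) - 1) * Real.exp (-(n : ℝ))) ^ (-(1 + s)) := by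
    have hi : (1 : ℝ) ≤ i := by exact_mod_cast (Finset.mem_Icc.1 hi).1.trans' one_le_two
    rw [Real.rpow_def_of_pos (by nlinarith [Real.exp_pos n, Real.exp_pos (-(n : ℝ))]), neg_mul,
      mul_neg]
  have h := mul_sum_Icc_rpow_neg_one_sub_bounds (Real.exp_pos n) (Real.exp_pos (-(n : ℝ))) hs
    (Nat.one_le_pow n 9 (by norm_num))
  rw [dCutTail, Finset.sum_congr rfl fun i hi => congrArg _ (hterm i hi), ← Finset.mul_sum]
  push_cast at h
  exact h

lemma eventually_ell_add_pos (c : ℝ) : ∀ᶠ n : ℕ in atTop, 0 < ell n + c := by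
  filter_upwards [tendsto_ell_atTop.eventually_gt_atTop (-c)] with n hn
  linarith

lemma tendsto_exp_rpow_neg_div (c : ℝ) :
    Tendsto (fun n : ℕ => Real.exp n ^ (-((ell n + c) / n)) / ((ell n + c) / n)) atTop
      (𝓝 (Real.exp (-c))) := by
  have h := (tendsto_log_div_ell_add c).const_mul (Real.exp (-c))
  rw [mul_one] at h
  refine h.congr' ?_
  filter_upwards [eventually_ell_add_pos c, eventually_ge_atTop 2] with n hpos hn
  have hn' : (n : ℝ) ≠ 0 := by positivity
  rw [← Real.exp_mul, mul_neg, mul_div_cancel₀ _ hn', neg_add, Real.exp_add, exp_neg_ell hn]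
  field_simp

lemma two_lt_log_nine : 2 < Real.log 9 := by
  rw [Real.lt_log_iff_exp_lt (by norm_num), show (2 : ℝ) = 1 + 1 by norm_num, Real.exp_add]
  nlinarith [Real.exp_one_lt_d9, Real.exp_pos 1]

lemma tendsto_rpow_neg_div_zero (c : ℝ) :
    Tendsto (fun n : ℕ => (Real.exp n + ((9 : ℝ) ^ n - 1) * Real.exp (-(n : ℝ))) ^
      (-((ell n + c) / n)) / ((ell n + c) / n)) atTop (𝓝 0) := by
  have hκ : 0 < Real.log 9 - 2 := by linarith [two_lt_log_nine]
  have hsmall : Tendsto (fun n : ℕ => Real.exp (-((ell n + c) * (Real.log 9 - 2)))) atTop (𝓝 0) :=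
    Real.tendsto_exp_neg_atTop_nhds_zero.comp
      ((tendsto_atTop_add_const_right _ c tendsto_ell_atTop).atTop_mul_const hκ)
  have hupper := (tendsto_exp_rpow_neg_div c).mul hsmall
  rw [mul_zero] at hupper
  refine squeeze_zero' ?_ ?_ hupper
  all_goals filter_upwards [eventually_ell_add_pos c, eventually_gt_atTop 0] with n hpos hn
  all_goals
    have hn' : (0 : ℝ) < n := by exact_mod_cast hn
    have hs : 0 < (ell n + c) / n := div_pos hpos hn'
    have h9 : (1 : ℝ) ≤ 9 ^ n := one_le_pow₀ (by norm_num)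
  · exact div_nonneg (Real.rpow_nonneg (by positivity) _) hs.le
  · have hB : Real.exp (n * (Real.log 9 - 1)) ≤
        Real.exp n + ((9 : ℝ) ^ n - 1) * Real.exp (-(n : ℝ)) := by
      rw [mul_sub, mul_one, sub_eq_add_neg, Real.exp_add, Real.exp_nat_mul,
        Real.exp_log (by norm_num)]
      have := Real.exp_le_exp.2 (neg_le_self hn'.le)
      nlinarith
    calc _ ≤ Real.exp (n * (Real.log 9 - 1)) ^ (-((ell n + c) / n)) / ((ell n + c) / n) := by
          exact div_le_div_of_nonneg_right
            (Real.rpow_le_rpow_of_nonpos (Real.exp_pos _) hB (neg_nonpos.2 hs.le)) hs.le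
      _ = _ := by
          rw [← Real.exp_mul, ← Real.exp_mul, div_mul_eq_mul_div, ← Real.exp_add]
          congr 2
          field_simp
          ring

lemma tendsto_exp_neg_mul_exp_rpow (c : ℝ) :
    Tendsto (fun n : ℕ => Real.exp (-(n : ℝ)) * Real.exp n ^ (-(1 + (ell n + c) / n))) atTop
      (𝓝 0) := by
  refine squeeze_zero' (Eventually.of_forall fun n => by positivity) ?_
    (Real.tendsto_exp_neg_atTop_nhds_zero.comp tendsto_natCast_atTop_atTop)
  filter_upwards [eventually_ell_add_pos c] with n hpos
  have hs : 0 ≤ (ell n + c) / n := div_nonneg hpos.le n.cast_nonneg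
  exact mul_le_of_le_one_right (Real.exp_pos _).le
    (Real.rpow_le_one_of_one_le_of_nonpos (Real.one_le_exp n.cast_nonneg) (by linarith))

lemma tendsto_dCutTail (c : ℝ) :
    Tendsto (fun n : ℕ => dCutTail n (1 + ell n / n + c / n)) atTop (𝓝 (Real.exp (-c))) := by
  have hupper := (tendsto_exp_rpow_neg_div c).sub (tendsto_rpow_neg_div_zero c)
  rw [sub_zero] at hupper
  simp only [← sub_div] at hupper
  have hlower := hupper.sub (tendsto_exp_neg_mul_exp_rpow c)
  rw [sub_zero] at hlower
  refine tendsto_of_tendsto_of_tendsto_of_le_of_le' hlower hupper ?_ ?_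
  all_goals filter_upwards [eventually_ell_add_pos c, eventually_gt_atTop 0] with n hpos hn
  all_goals
    have hs : 0 < (ell n + c) / n := div_pos hpos (by exact_mod_cast hn)
    rw [add_assoc, ← add_div]
  exacts [(dCutTail_one_add_bounds hs).1, (dCutTail_one_add_bounds hs).2]

lemma tendsto_exp_neg_of_tendsto_ofReal {ι : Type*} {l : Filter ι} {x : ι → ℝ} {γ : ℝ≥0∞}
    (hx : ∀ᶠ i in l, 0 ≤ x i) (h : Tendsto (fun i => ENNReal.ofReal (x i)) l (𝓝 γ)) :
    Tendsto (fun i => Real.exp (-x i)) l (𝓝 (if γ = ⊤ then 0 else Real.exp (-γ.toReal))) := by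
  split_ifs with hγ
  · subst hγ
    exact Real.tendsto_exp_neg_atTop_nhds_zero.comp (ENNReal.tendsto_ofReal_nhds_top.1 h)
  · refine ((Real.continuous_exp.tendsto _).comp ((ENNReal.tendsto_toReal hγ).comp h).neg).congr' ?_
    filter_upwards [hx] with i hi
    simp [ENNReal.toReal_ofReal hi]

lemma tendsto_one_add_div_mul_ell {β : ℕ → ℝ} (hβ : ∀ n, β n ∈ Set.Icc (0 : ℝ) 1) :
    Tendsto (fun n : ℕ => 1 + β n / n * ell n) atTop (𝓝 1) := by
  have h : Tendsto (fun n : ℕ => β n / n * ell n) atTop (𝓝 0) := by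
    refine squeeze_zero (fun n => ?_) (fun n => ?_) tendsto_ell_div_natCast
    · have := (hβ n).1
      have := ell_nonneg n
      positivity
    · rw [div_mul_eq_mul_div]
      exact div_le_div_of_nonneg_right
        (mul_le_of_le_one_left (ell_nonneg n) (hβ n).2) n.cast_nonneg
  simpa using h.const_add 1

lemma tendsto_dCut_head {β : ℕ → ℝ} (hβ : ∀ n, β n ∈ Set.Icc (0 : ℝ) 1) {γ : ℝ≥0∞}
    (hγ : Tendsto (fun n => ENNReal.ofReal ((1 - β n) * ell n)) atTop (𝓝 γ)) (c : ℝ) :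
    Tendsto (fun n : ℕ =>
        Real.exp n * Real.exp (-((n : ℝ) / (1 + β n / n * ell n)) * (1 + ell n / n + c / n)))
      atTop (𝓝 ((if γ = ⊤ then 0 else Real.exp (-γ.toReal)) * Real.exp (-c))) := by
  have hD := (tendsto_one_add_div_mul_ell hβ).inv₀ one_ne_zero
  have hL := tendsto_exp_neg_of_tendsto_ofReal (Eventually.of_forall fun n =>
    mul_nonneg (sub_nonneg.2 (hβ n).2) (ell_nonneg n)) hγ
  have h := (hL.rpow hD (Or.inr (by norm_num))).mul (hD.const_mul (-c)).rexp
  rw [inv_one, Real.rpow_one, mul_one] at h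
  refine h.congr' ?_
  filter_upwards [eventually_gt_atTop 0] with n hn
  have hn' : (0 : ℝ) < n := by exact_mod_cast hn
  have hDpos : 0 < β n * ell n + n := by
    have := (hβ n).1
    have := ell_nonneg n
    positivity
  -- `n - n t / D = -((1 - β) ℓ + c) / D` for `t = 1 + (ℓ + c) / n` and `D = 1 + β ℓ / n`.
  rw [← Real.exp_mul, ← Real.exp_add, ← Real.exp_add]
  congr 1
  field_simp
  linear_combination mul_inv_cancel₀ hDpos.ne'

/-- Equation (17) of Barrera–Ycart: if `γ = lim (1-β_n) ℓ_n` exists in `[0, ∞]`,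
then for every real `c`, `d_n(1 + ℓ_n/n + c/n) → e^{-c} (1 + e^{-γ})`
(with the convention `e^{-∞} = 0`). -/
theorem lemma_betan_main_step
    (β : ℕ → ℝ) (hβ : ∀ n, β n ∈ Set.Icc (0 : ℝ) 1)
    (γ : ℝ≥0∞)
    (hγ : Tendsto (fun n => ENNReal.ofReal ((1 - β n) * ell n)) atTop (𝓝 γ))
    (c : ℝ) :
    Tendsto (fun n => dCut β n (1 + ell n / n + c / n)) atTop
      (𝓝 (Real.exp (-c) * (1 + if γ = ⊤ then 0 else Real.exp (-γ.toReal)))) := by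
  have h := (tendsto_dCut_head hβ hγ c).add (tendsto_dCutTail c)
  simp only [← dCut_eq_add_dCutTail] at h
  convert h using 2
  ring
end
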